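/- Let r₁,…,r_n be real numbers that are linearly independent over the rationals. Then the exponential functions x ↦ e^{r_i x} on [0,1] are algebraically independent over ℝ: for every real polynomial P in n variables, if P(e^{r₁ x},…,e^{r_n x}) = 0 for all x ∈ [0,1], then P is the zero polynomial. In particular, the algebra of continuous functions on [0,1] that are real-analytic on (0,1) admits a set of free generators of cardinality continuum. -/

import Mathlib

open Set

/-- Distinct exponentials vanish on Icc only if all coefficients vanish. -/
lemma expA {ι : Type*} [Fintype ι] (s : ι → ℝ) (hs : Function.Injective s) (c : ι → ℝ)
    (h : ∀ x ∈ Set.Icc (0:ℝ) 1, ∑ i, c i * Real.exp (s i * x) = 0) : ∀ i, c i = 0 := by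
  set f : ℝ → ℝ := fun x => ∑ i, c i * Real.exp (s i * x) with hf
  have hA : AnalyticOnNhd ℝ f Set.univ := by
    apply Finset.analyticOnNhd_fun_sum
    intro i _
    intro x hx
    exact (analyticAt_const.mul (analyticAt_rexp.comp
      ((analyticAt_const.mul analyticAt_id) : AnalyticAt ℝ (fun y => s i * y) x)) : _)
  have hzero : ∀ x : ℝ, f x = 0 := by
    have h2 : f =ᶠ[nhds (1/2 : ℝ)] 0 := by
      filter_upwards [Ioo_mem_nhds (by norm_num : (0:ℝ)<1/2) (by norm_num : (1/2:ℝ)<1)]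
        with x hx
      exact h x (Set.mem_Icc_of_Ioo hx)
    have := hA.eqOn_zero_of_preconnected_of_eventuallyEq_zero isPreconnected_univ
      (Set.mem_univ (1/2 : ℝ)) h2
    intro x; exact this (Set.mem_univ x)
  -- characters
  let χ : ι → (Multiplicative ℝ →* ℝ) := fun i =>
    { toFun := fun x => Real.exp (s i * (Multiplicative.toAdd x))
      map_one' := by simp
      map_mul' := by
        intro x y
        simp [mul_add, Real.exp_add] }
  have hχinj : Function.Injective χ := by
    intro i j hij
    have := congrArg (fun m => m (Multiplicative.ofAdd (1:ℝ))) hij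
    simp only [χ, MonoidHom.coe_mk, OneHom.coe_mk, toAdd_ofAdd, mul_one] at this
    exact hs (Real.exp_injective this)
  have hli : LinearIndependent ℝ (fun i => ((χ i : Multiplicative ℝ → ℝ))) :=
    (linearIndependent_monoidHom (Multiplicative ℝ) ℝ).comp χ hχinj
  have := Fintype.linearIndependent_iff.mp hli c ?_
  · exact this
  · funext x
    have := hzero (Multiplicative.toAdd x)
    simpa [χ, Finset.sum_apply] using this

lemma part1 (n : ℕ) (r : Fin n → ℝ) (hr : LinearIndependent ℚ r)
    (P : MvPolynomial (Fin n) ℝ)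
    (h : ∀ x ∈ Set.Icc (0 : ℝ) 1,
      MvPolynomial.eval (fun i => Real.exp (r i * x)) P = 0) : P = 0 := by
  classical
  set ι := {k // k ∈ P.support} with hι
  set s : ι → ℝ := fun k => ∑ i, (k.1 i : ℝ) * r i with hsdef
  have hsinj : Function.Injective s := by
    intro k k' hkk'
    have hQ := Fintype.linearIndependent_iff.mp hr (fun i => (k.1 i : ℚ) - (k'.1 i : ℚ)) ?_
    · apply Subtype.ext
      apply Finsupp.ext
      intro i
      have : (k.1 i : ℚ) = (k'.1 i : ℚ) := by linarith [hQ i]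
      exact_mod_cast this
    · simp only [Rat.smul_def, Rat.cast_sub, Rat.cast_natCast, sub_mul,
        Finset.sum_sub_distrib]
      exact sub_eq_zero.mpr hkk'
  have key : ∀ x ∈ Set.Icc (0:ℝ) 1, ∑ k : ι, MvPolynomial.coeff k.1 P * Real.exp (s k * x) = 0 := by
    intro x hx
    have := h x hx
    rw [MvPolynomial.eval_eq'] at this
    rw [← this, ← Finset.sum_coe_sort P.support]
    apply Finset.sum_congr rfl
    intro k _
    congr 1
    simp only [hsdef, ← Real.exp_nat_mul, ← Real.exp_sum]
    rw [Finset.sum_mul]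
    congr 1
    apply Finset.sum_congr rfl
    intro i _
    ring
  have hc := expA s hsinj (fun k => MvPolynomial.coeff k.1 P) key
  ext k
  by_cases hk : k ∈ P.support
  · simpa using hc ⟨k, hk⟩
  · simpa using MvPolynomial.notMem_support_iff.mp hk

lemma exists_h : ∃ h : ℝ → ℝ, Function.Injective h ∧ LinearIndependent ℚ h := by
  classical
  have hbcard : Cardinal.mk (Module.Basis.ofVectorSpaceIndex ℚ ℝ) = Cardinal.mk ℝ := by
    have := (Module.Basis.ofVectorSpace ℚ ℝ).mk_eq_rank''
    rw [this, Real.rank_rat_real, Cardinal.mk_real]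
  obtain ⟨e⟩ := Cardinal.eq.mp hbcard.symm
  refine ⟨fun a => (e a : ℝ), ?_, ?_⟩
  · exact Subtype.val_injective.comp e.injective
  · have hli : LinearIndependent ℚ ((Subtype.val : (Module.Basis.ofVectorSpaceIndex ℚ ℝ) → ℝ)) := by
      have := (Module.Basis.ofVectorSpace ℚ ℝ).linearIndependent
      rwa [Module.Basis.coe_ofVectorSpace] at this
    exact hli.comp e e.injective

theorem stmt11 :
    (∀ (n : ℕ) (r : Fin n → ℝ), LinearIndependent ℚ r →
      ∀ P : MvPolynomial (Fin n) ℝ,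
        (∀ x ∈ Set.Icc (0 : ℝ) 1,
          MvPolynomial.eval (fun i => Real.exp (r i * x)) P = 0) →
        P = 0) ∧
    ∃ g : ℝ → ℝ → ℝ,
      (∀ α, ContinuousOn (g α) (Set.Icc 0 1) ∧
        ∀ x ∈ Set.Ioo (0 : ℝ) 1, AnalyticAt ℝ (g α) x) ∧
      (∀ (n : ℕ) (P : MvPolynomial (Fin n) ℝ), P ≠ 0 →
        ∀ α : Fin n → ℝ, Function.Injective α →
          ∃ x ∈ Set.Icc (0 : ℝ) 1,
            MvPolynomial.eval (fun i => g (α i) x) P ≠ 0) := by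
  refine ⟨part1, ?_⟩
  obtain ⟨h, hinj, hli⟩ := exists_h
  refine ⟨fun α x => Real.exp (h α * x), fun α => ⟨?_, fun x _ => ?_⟩, ?_⟩
  · exact (Real.continuous_exp.comp (continuous_const.mul continuous_id)).continuousOn
  · exact analyticAt_rexp.comp
      ((analyticAt_const.mul analyticAt_id) : AnalyticAt ℝ (fun y => h α * y) x)
  · intro n P hP α hα
    by_contra hcon
    push_neg at hcon
    exact hP (part1 n (h ∘ α) (hli.comp α hα) P hcon)
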